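/- Each ridge polynomial φ̃_{n,k}(x) = (1/√π) U_n(x₁ cos(kh) + x₂ sin(kh)) is a polynomial of degree n in (x₁,x₂) that is orthogonal in L²(B_2) to every polynomial of total degree at most n−1. -/

import Mathlib

/-!
Write `θ = k h`. Substituting `cos θ • X₀ + sin θ • X₁` into `U_n` gives a polynomial of total
degree at most `n`, and restricting it to the line through `(cos θ, sin θ)` gives back `U_n`,
so the degree is exactly `n`.

For orthogonality, rotate the disk by `θ`: the ridge becomes `U_n(x₁)` and `Q` becomes another
polynomial of degree `< n`, so it suffices to treat monomials `x₁^a x₂^b` with `a + b < n`.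
Integrating over `x₂` first, the slice `|x₂| < √(1 - x₁²)` kills odd `b` and, for `b = 2t`, leaves
`∫₋₁¹ U_n(u) u^a (1 - u²)^t √(1 - u²) du`, which vanishes because `U_n` is orthogonal to lower
degree polynomials for the weight `√(1 - u²)`. That last fact follows from
`(1 - X²) U_n = X T_{n+1} - T_{n+2}` and the orthogonality of `T_m` to polynomials of degree
`< m` for the weight `1 / √(1 - u²)`.
-/

open Real MeasureTheory

namespace Polynomial.Chebyshev

theorem integral_T_mul_pow_measureT_eq_zero {m j : ℕ} (h : j < m) :
    ∫ x, (T ℝ m).eval x * x ^ j ∂measureT = 0 := by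
  induction j generalizing m with
  | zero =>
    simpa using integral_eval_T_real_measureT_of_ne_zero (n := m) (by omega)
  | succ j ih =>
    obtain ⟨l, rfl⟩ : ∃ l, m = l + 1 := ⟨m - 1, by omega⟩
    have hrec (x : ℝ) : (T ℝ (l + 1 : ℕ)).eval x * x ^ (j + 1)
        = ((T ℝ (l + 2 : ℕ)).eval x * x ^ j + (T ℝ l).eval x * x ^ j) / 2 := by
      have := congrArg (eval x) (T_add_two ℝ l)
      push_cast at this ⊢
      simp only [eval_sub, eval_mul, eval_ofNat, eval_X] at this
      rw [this]; ring
    simp_rw [hrec]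
    rw [integral_div, integral_add (integrable_measureT (by fun_prop))
      (integrable_measureT (by fun_prop)), ih (by omega), ih (by omega)]
    simp

theorem integral_T_mul_measureT_eq_zero {m : ℕ} {p : ℝ[X]} (hp : p.natDegree < m) :
    ∫ x, (T ℝ m).eval x * p.eval x ∂measureT = 0 := by
  simp_rw [eval_eq_sum_range (p := p), Finset.mul_sum]
  rw [integral_finsetSum _ fun j _ => integrable_measureT (by fun_prop)]
  refine Finset.sum_eq_zero fun j hj => ?_
  simp_rw [mul_left_comm _ (p.coeff j)]
  rw [integral_const_mul, integral_T_mul_pow_measureT_eq_zero (by grind), mul_zero]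

theorem integral_U_mul_sqrt_eq_zero {n : ℕ} {p : ℝ[X]} (hp : p.natDegree < n) :
    ∫ x in -1..1, (U ℝ n).eval x * p.eval x * √(1 - x ^ 2) = 0 := by
  have hweight (x : ℝ) : (U ℝ n).eval x * p.eval x * √(1 - x ^ 2)
      = ((T ℝ (n + 1 : ℕ)).eval x * (X * p).eval x - (T ℝ (n + 2 : ℕ)).eval x * p.eval x)
        * √(1 - x ^ 2)⁻¹ := by
    rw [sqrt_inv]
    have := congrArg (eval x) (one_sub_X_sq_mul_U_eq_pol_in_T ℝ n)
    simp only [eval_sub, eval_mul, eval_one, eval_pow, eval_X] at this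
    have hsqrt : √(1 - x ^ 2) = (1 - x ^ 2) * (√(1 - x ^ 2))⁻¹ := by
      rw [← div_eq_mul_inv, div_sqrt]
    push_cast
    conv_lhs => rw [hsqrt]
    rw [eval_mul, eval_X]
    linear_combination (p.eval x * (√(1 - x ^ 2))⁻¹) * this
  simp_rw [hweight, ← integral_measureT]
  rw [integral_sub (integrable_measureT (by fun_prop)) (integrable_measureT (by fun_prop)),
    integral_T_mul_measureT_eq_zero, integral_T_mul_measureT_eq_zero, sub_zero]
  · omega
  · have : (X * p).natDegree ≤ 1 + p.natDegree :=
      natDegree_mul_le.trans (by gcongr; exact natDegree_X_le)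
    omega

end Polynomial.Chebyshev

namespace MvPolynomial

variable {σ τ R : Type*} [CommSemiring R]

theorem totalDegree_bind₁_le {m : ℕ} (g : σ → MvPolynomial τ R) (hg : ∀ i, (g i).totalDegree ≤ m)
    (Q : MvPolynomial σ R) : (bind₁ g Q).totalDegree ≤ Q.totalDegree * m := by
  rw [← aeval_eq_bind₁, aeval_def, eval₂]
  refine totalDegree_finsetSum_le fun d hd => (totalDegree_mul _ _).trans ?_
  rw [algebraMap_eq, totalDegree_C, zero_add]
  refine (totalDegree_finsetProd _ _).trans ?_
  calc ∑ i ∈ d.support, (g i ^ d i).totalDegree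
      ≤ ∑ i ∈ d.support, d i * m :=
        Finset.sum_le_sum fun i _ => (totalDegree_pow _ _).trans (Nat.mul_le_mul_left _ (hg i))
    _ = d.sum (fun _ e => e) * m := by rw [Finsupp.sum, Finset.sum_mul]
    _ ≤ Q.totalDegree * m := Nat.mul_le_mul_right _ (le_totalDegree hd)

theorem totalDegree_polynomial_aeval_le (L : MvPolynomial σ R) (p : Polynomial R) :
    (Polynomial.aeval L p).totalDegree ≤ p.natDegree * L.totalDegree := by
  rw [Polynomial.aeval_eq_sum_range]
  refine totalDegree_finsetSum_le fun i hi => (totalDegree_smul_le _ _).trans ?_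
  exact (totalDegree_pow _ _).trans
    (Nat.mul_le_mul_right _ (Nat.lt_succ_iff.1 (Finset.mem_range.1 hi)))

theorem totalDegree_smul_X_add_smul_X_le (a b : R) (i j : σ) :
    (a • X i + b • X j : MvPolynomial σ R).totalDegree ≤ 1 :=
  (totalDegree_add _ _).trans <| max_le
    ((totalDegree_smul_le _ _).trans ((totalDegree_monomial_le _ _).trans (by simp)))
    ((totalDegree_smul_le _ _).trans ((totalDegree_monomial_le _ _).trans (by simp)))

end MvPolynomial

open MvPolynomial in
theorem totalDegree_aeval_cos_smul_X_add_sin_smul_X (θ : ℝ) (p : Polynomial ℝ) :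
    (Polynomial.aeval (cos θ • X 0 + sin θ • X 1 : MvPolynomial (Fin 2) ℝ) p).totalDegree
      = p.natDegree := by
  set L : MvPolynomial (Fin 2) ℝ := cos θ • X 0 + sin θ • X 1
  refine le_antisymm ((totalDegree_polynomial_aeval_le L p).trans
    (mul_le_of_le_one_right (Nat.zero_le _) (totalDegree_smul_X_add_smul_X_le ..))) ?_
  -- Restricting to the line `t ↦ t • (cos θ, sin θ)` turns `L` into `t` and recovers `p`.
  let ψ : MvPolynomial (Fin 2) ℝ →ₐ[ℝ] Polynomial ℝ :=
    aeval ![cos θ • Polynomial.X, sin θ • Polynomial.X]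
  have hψL : ψ L = Polynomial.X := by
    simp only [ψ, L, map_add, map_smul, aeval_X, Matrix.cons_val_zero, Matrix.cons_val_one,
      smul_smul, ← add_smul, ← sq, cos_sq_add_sin_sq, one_smul]
  calc p.natDegree = (ψ (Polynomial.aeval L p)).natDegree := by
        rw [← Polynomial.aeval_algHom_apply, hψL, Polynomial.aeval_X_left_apply]
    _ ≤ (Polynomial.aeval L p).totalDegree * 1 :=
        aeval_natDegree_le _ le_rfl _ fun i => by
          fin_cases i <;> exact (Polynomial.natDegree_smul_le _ _).trans Polynomial.natDegree_X_le
    _ = _ := mul_one _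

theorem LinearIsometryEquiv.setIntegral_ball_zero_comp {E F : Type*} [NormedAddCommGroup E]
    [InnerProductSpace ℝ E] [FiniteDimensional ℝ E] [MeasurableSpace E] [BorelSpace E]
    [NormedAddCommGroup F] [NormedSpace ℝ F] (L : E ≃ₗᵢ[ℝ] E) (f : E → F) (r : ℝ) :
    ∫ x in Metric.ball 0 r, f (L x) = ∫ x in Metric.ball 0 r, f x := by
  have hpre : L ⁻¹' Metric.ball 0 r = Metric.ball 0 r := by
    rw [L.preimage_ball, map_zero]
  conv_lhs => rw [← hpre]
  exact L.measurePreserving.setIntegral_preimage_emb L.toHomeomorph.measurableEmbedding f _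

theorem setIntegral_unitBall_eq_setIntegral_disk (g : ℝ → ℝ → ℝ) :
    ∫ x in Metric.ball (0 : EuclideanSpace ℝ (Fin 2)) 1, g (x 0) (x 1)
      = ∫ p in {q : ℝ × ℝ | q.1 ^ 2 + q.2 ^ 2 < 1}, g p.1 p.2 := by
  let e : ℝ × ℝ ≃ᵐ EuclideanSpace ℝ (Fin 2) :=
    MeasurableEquiv.finTwoArrow.symm.trans (MeasurableEquiv.toLp 2 (Fin 2 → ℝ))
  have he : MeasurePreserving e :=
    (EuclideanSpace.volume_preserving_symm_measurableEquiv_toLp (Fin 2)).symm.comp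
      (volume_preserving_finTwoArrow ℝ).symm
  have hpre : e ⁻¹' Metric.ball 0 1 = {q : ℝ × ℝ | q.1 ^ 2 + q.2 ^ 2 < 1} := by
    ext q
    simp [e, EuclideanSpace.norm_eq, Fin.sum_univ_two, Real.sqrt_lt' one_pos]
  rw [← hpre, ← he.setIntegral_preimage_emb e.measurableEmbedding]
  rfl

theorem setIntegral_disk_eq_intervalIntegral {F : ℝ × ℝ → ℝ} (hF : Continuous F) :
    ∫ p in {q : ℝ × ℝ | q.1 ^ 2 + q.2 ^ 2 < 1}, F p
      = ∫ u in -1..1, ∫ v in -√(1 - u ^ 2)..√(1 - u ^ 2), F (u, v) := by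
  set D := {q : ℝ × ℝ | q.1 ^ 2 + q.2 ^ 2 < 1}
  have hD : MeasurableSet D := (isOpen_lt (by fun_prop) continuous_const).measurableSet
  have hDsub : D ⊆ Set.Icc (-1) 1 ×ˢ Set.Icc (-1) 1 := fun q (hq : q.1 ^ 2 + q.2 ^ 2 < 1) => by
    simp only [Set.mem_prod, Set.mem_Icc]
    refine ⟨⟨?_, ?_⟩, ?_, ?_⟩ <;> nlinarith
  have hint : Integrable (D.indicator F) :=
    (integrable_indicator_iff hD).2 <| (hF.continuousOn.integrableOn_compact
      (isCompact_Icc.prod isCompact_Icc)).mono_set hDsub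
  have hslice (u : ℝ) : ∫ v, D.indicator F (u, v)
      = ∫ v in -√(1 - u ^ 2)..√(1 - u ^ 2), F (u, v) := by
    have hmem (v : ℝ) : (u, v) ∈ D ↔ v ∈ Set.Ioo (-√(1 - u ^ 2)) √(1 - u ^ 2) := by
      rw [Set.mem_Ioo, ← abs_lt, Real.lt_sqrt (abs_nonneg v), sq_abs]
      change u ^ 2 + v ^ 2 < 1 ↔ _
      constructor <;> intro h <;> linarith
    have : (fun v => D.indicator F (u, v))
        = (Set.Ioo (-√(1 - u ^ 2)) √(1 - u ^ 2)).indicator fun v => F (u, v) := by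
      ext v
      simp only [Set.indicator_apply, hmem]
    rw [this, integral_indicator measurableSet_Ioo, ← integral_Ioc_eq_integral_Ioo,
      intervalIntegral.integral_of_le (by linarith [Real.sqrt_nonneg (1 - u ^ 2)])]
  have hvanish (u : ℝ) (hu : u ∉ Set.Ioc (-1) 1) :
      ∫ v in -√(1 - u ^ 2)..√(1 - u ^ 2), F (u, v) = 0 := by
    rw [Real.sqrt_eq_zero_of_nonpos, neg_zero, intervalIntegral.integral_same]
    simp only [Set.mem_Ioc, not_and_or, not_lt, not_le] at hu
    rcases hu with hu | hu <;> nlinarith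
  rw [← integral_indicator hD, Measure.volume_eq_prod, integral_prod _ hint]
  simp_rw [hslice]
  rw [← setIntegral_eq_integral_of_forall_compl_eq_zero hvanish,
    intervalIntegral.integral_of_le (by norm_num)]

open Polynomial.Chebyshev in
theorem setIntegral_unitBall_U_mul_monomial_eq_zero {n a b : ℕ} (hab : a + b < n) :
    ∫ x in Metric.ball (0 : EuclideanSpace ℝ (Fin 2)) 1,
      (U ℝ n).eval (x 0) * (x 0 ^ a * x 1 ^ b) = 0 := by
  rw [setIntegral_unitBall_eq_setIntegral_disk (fun u v => (U ℝ n).eval u * (u ^ a * v ^ b)),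
    setIntegral_disk_eq_intervalIntegral (by fun_prop)]
  simp only [intervalIntegral.integral_const_mul, integral_pow]
  obtain ⟨t, rfl | rfl⟩ := Nat.even_or_odd' b
  · -- The inner integral is `2 (1 - u²)^t √(1 - u²) / (2t + 1)`.
    set r : Polynomial ℝ := Polynomial.X ^ a * (1 - Polynomial.X ^ 2) ^ t
    have hr : r.natDegree < n := by
      have : r.natDegree ≤ a + t * 2 := by
        unfold r; compute_degree
      omega
    have hinner : Set.EqOn
        (fun u => (U ℝ n).eval u * (u ^ a *
          ((√(1 - u ^ 2) ^ (2 * t + 1) - (-√(1 - u ^ 2)) ^ (2 * t + 1)) / ((2 * t : ℕ) + 1))))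
        (fun u => (2 / ((2 * t : ℕ) + 1)) * ((U ℝ n).eval u * r.eval u * √(1 - u ^ 2)))
        (Set.uIcc (-1) 1) := by
      intro u hu
      rw [Set.uIcc_of_le (by norm_num), Set.mem_Icc] at hu
      have hs : √(1 - u ^ 2) ^ (2 * t + 1) = (1 - u ^ 2) ^ t * √(1 - u ^ 2) := by
        rw [pow_succ, pow_mul, sq_sqrt (by nlinarith)]
      simp only [r, Polynomial.eval_mul, Polynomial.eval_pow, Polynomial.eval_sub,
        Polynomial.eval_one, Polynomial.eval_X, Odd.neg_pow ⟨t, rfl⟩, hs]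
      ring
    rw [intervalIntegral.integral_congr hinner, intervalIntegral.integral_const_mul,
      integral_U_mul_sqrt_eq_zero hr, mul_zero]
  · have hodd (u : ℝ) :
        (√(1 - u ^ 2) ^ (2 * t + 1 + 1) - (-√(1 - u ^ 2)) ^ (2 * t + 1 + 1)) = 0 := by
      rw [Even.neg_pow ⟨t + 1, by ring⟩, sub_self]
    simp [hodd]

open Polynomial.Chebyshev in
theorem setIntegral_unitBall_U_mul_eval_eq_zero {n : ℕ} {Q : MvPolynomial (Fin 2) ℝ}
    (hQ : Q.totalDegree < n) :
    ∫ x in Metric.ball (0 : EuclideanSpace ℝ (Fin 2)) 1,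
      (U ℝ n).eval (x 0) * MvPolynomial.eval (fun i => x i) Q = 0 := by
  simp_rw [MvPolynomial.eval_eq', Fin.prod_univ_two, Finset.mul_sum]
  rw [integral_finsetSum _ fun d _ => (ContinuousOn.integrableOn_compact
    (isCompact_closedBall 0 1) (by fun_prop)).mono_set Metric.ball_subset_closedBall]
  refine Finset.sum_eq_zero fun d hd => ?_
  have hdeg : d 0 + d 1 < n := by
    have := MvPolynomial.le_totalDegree hd
    rw [Finsupp.sum_fintype _ _ fun _ => rfl, Fin.sum_univ_two] at this
    omega
  simp_rw [mul_left_comm _ (MvPolynomial.coeff d Q)]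
  rw [integral_const_mul, setIntegral_unitBall_U_mul_monomial_eq_zero hdeg, mul_zero]

noncomputable def planeRotation (θ : ℝ) :
    EuclideanSpace ℝ (Fin 2) ≃ₗᵢ[ℝ] EuclideanSpace ℝ (Fin 2) :=
  Complex.orthonormalBasisOneI.repr.symm.trans
    ((rotation (Circle.exp θ)).trans Complex.orthonormalBasisOneI.repr)

@[simp]
theorem planeRotation_apply_zero (θ : ℝ) (x : EuclideanSpace ℝ (Fin 2)) :
    planeRotation θ x 0 = cos θ * x 0 - sin θ * x 1 := by
  simp [planeRotation, rotation_apply, Circle.coe_exp, Complex.exp_mul_I, ← Complex.ofReal_cos,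
    ← Complex.ofReal_sin]

@[simp]
theorem planeRotation_apply_one (θ : ℝ) (x : EuclideanSpace ℝ (Fin 2)) :
    planeRotation θ x 1 = sin θ * x 0 + cos θ * x 1 := by
  simp [planeRotation, rotation_apply, Circle.coe_exp, Complex.exp_mul_I, ← Complex.ofReal_cos,
    ← Complex.ofReal_sin]
  ring

open Polynomial.Chebyshev MvPolynomial in
theorem setIntegral_unitBall_U_ridge_mul_eval_eq_zero {n : ℕ} (θ : ℝ)
    {Q : MvPolynomial (Fin 2) ℝ} (hQ : Q.totalDegree < n) :
    ∫ x in Metric.ball (0 : EuclideanSpace ℝ (Fin 2)) 1,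
      (U ℝ n).eval (x 0 * cos θ + x 1 * sin θ) * eval (fun i => x i) Q = 0 := by
  set ρ := planeRotation θ
  set g : Fin 2 → MvPolynomial (Fin 2) ℝ :=
    ![cos θ • X 0 + (-sin θ) • X 1, sin θ • X 0 + cos θ • X 1]
  have hdeg : (bind₁ g Q).totalDegree < n :=
    (totalDegree_bind₁_le g (fun i => by fin_cases i <;> exact totalDegree_smul_X_add_smul_X_le ..)
      Q).trans_lt (by simpa using hQ)
  have hrotate (x : EuclideanSpace ℝ (Fin 2)) :
      (U ℝ n).eval (ρ x 0 * cos θ + ρ x 1 * sin θ) * eval (fun i => ρ x i) Q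
        = (U ℝ n).eval (x 0) * eval (fun i => x i) (bind₁ g Q) := by
    have hridge : ρ x 0 * cos θ + ρ x 1 * sin θ = x 0 := by
      simp only [ρ, planeRotation_apply_zero, planeRotation_apply_one]
      linear_combination x 0 * cos_sq_add_sin_sq θ
    have hQ : eval (fun i => ρ x i) Q = eval (fun i => x i) (bind₁ g Q) := by
      rw [← aeval_eq_eval, ← aeval_eq_eval, aeval_bind₁]
      congr 1
      ext i
      fin_cases i <;> simp [ρ, g, sub_eq_add_neg]
    rw [hridge, hQ]
  rw [← ρ.setIntegral_ball_zero_comp]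
  simp_rw [hrotate]
  exact setIntegral_unitBall_U_mul_eval_eq_zero hdeg

theorem ridge_polynomial_degree_and_orthogonality_general (n k : ℕ) :
    (∃ P : MvPolynomial (Fin 2) ℝ, P.totalDegree = n ∧
      ∀ x : Fin 2 → ℝ,
        MvPolynomial.eval x P
          = (1 / Real.sqrt π) *
              (Polynomial.Chebyshev.U ℝ n).eval
                (x 0 * Real.cos (k * (π / (n + 1))) + x 1 * Real.sin (k * (π / (n + 1))))) ∧
    (∀ Q : MvPolynomial (Fin 2) ℝ, Q.totalDegree < n →
      (∫ x in Metric.ball (0 : EuclideanSpace ℝ (Fin 2)) 1,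
        ((1 / Real.sqrt π) *
            (Polynomial.Chebyshev.U ℝ n).eval
              (x 0 * Real.cos (k * (π / (n + 1))) + x 1 * Real.sin (k * (π / (n + 1))))) *
          MvPolynomial.eval (fun i => x i) Q) = 0) := by
  set θ : ℝ := k * (π / (n + 1))
  refine ⟨⟨Polynomial.aeval (cos θ • MvPolynomial.X 0 + sin θ • MvPolynomial.X 1)
    ((1 / √π) • Polynomial.Chebyshev.U ℝ n), ?_, fun x => ?_⟩, fun Q hQ => ?_⟩
  · rw [totalDegree_aeval_cos_smul_X_add_sin_smul_X, Polynomial.natDegree_smul _ (by positivity),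
      Polynomial.Chebyshev.natDegree_U_natCast]
  · rw [← MvPolynomial.aeval_eq_eval, ← Polynomial.aeval_algHom_apply]
    simp [mul_comm]
  · simp_rw [mul_assoc]
    rw [integral_const_mul, setIntegral_unitBall_U_ridge_mul_eval_eq_zero θ hQ, mul_zero]

/-- Each ridge polynomial `φ̃_{n,k}(x) = (1/√π) U_n(x₁ cos(kh) + x₂ sin(kh))` is a
polynomial of total degree `n` and is orthogonal in `L²(B_2)` to all polynomials of
total degree at most `n − 1`. -/
theorem ridge_polynomial_degree_and_orthogonality (n k : ℕ) (hk : k ≤ n) :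
    (∃ P : MvPolynomial (Fin 2) ℝ, P.totalDegree = n ∧
      ∀ x : Fin 2 → ℝ,
        MvPolynomial.eval x P
          = (1 / Real.sqrt π) *
              (Polynomial.Chebyshev.U ℝ n).eval
                (x 0 * Real.cos (k * (π / (n + 1))) + x 1 * Real.sin (k * (π / (n + 1))))) ∧
    (∀ Q : MvPolynomial (Fin 2) ℝ, Q.totalDegree < n →
      (∫ x in Metric.ball (0 : EuclideanSpace ℝ (Fin 2)) 1,
        ((1 / Real.sqrt π) *
            (Polynomial.Chebyshev.U ℝ n).eval
              (x 0 * Real.cos (k * (π / (n + 1))) + x 1 * Real.sin (k * (π / (n + 1))))) *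
          MvPolynomial.eval (fun i => x i) Q) = 0) :=
  ridge_polynomial_degree_and_orthogonality_general n k
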